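/- Let p : Y → X be a proper holomorphic surjective submersion with X connected and with connected fibers, and let F : Y → Y be a holomorphic map such that for some points a, b ∈ X, F maps the fiber Y_a = p⁻¹{a} into the fiber Y_b = p⁻¹{b}. Then F is a map of fiber spaces: there exists a holomorphic map f : X → X with p ∘ F = f ∘ p. -/

import Mathlib

/-!
The set `S` of points over whose fiber `p ∘ F` is constant contains `a`; we show it is clopen,
hence all of `X`. Everything rests on local parametrizations of the fibers: near any `y`, the
implicit function theorem in charts gives a holomorphic `Ψ (x', z)` with `p (Ψ x' z) = x'` whose
slice `Ψ (p y)` covers a neighbourhood of `y` in its fiber (this needs holomorphic maps to be `C¹`,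
which follows from Cauchy's estimate). `S` is open because, by properness, the fibers near a point
of `S` are mapped into a single chart, where the maximum modulus principle along a compact
connected fiber forces constancy. `S` is closed because constancy on the fibers over `x' → x`
passes to the limit through `Ψ`. Finally the induced map `f` is holomorphic, being locally
`p ∘ F ∘ Ψ (·, 0)`.
-/

open Set Filter Function Metric
open scoped Topology Manifold

theorem IsPreconnected.apply_eq_of_eventually_eq {α β : Type*} [TopologicalSpace α]
    [TopologicalSpace β] [T1Space β] {s : Set α} {f : α → β} {c : β} (hs : IsPreconnected s)
    (hf : ContinuousOn f s) (h : ∀ y ∈ s, f y = c → ∀ᶠ y' in 𝓝[s] y, f y' = c) {y₀ y : α}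
    (hy₀ : y₀ ∈ s) (hc : f y₀ = c) (hy : y ∈ s) : f y = c := by
  refine (hs.induction₂ (fun a b ↦ (f a = c ↔ f b = c)) (fun a ha ↦ ?_)
    (fun _ _ _ _ _ _ ↦ Iff.trans) (fun _ _ _ _ ↦ Iff.symm) hy₀ hy).1 hc
  by_cases hfa : f a = c
  · exact (h a ha hfa).mono fun b hb ↦ iff_of_true hfa hb
  · exact ((hf a ha).eventually_ne hfa).mono fun b hb ↦ iff_of_false hfa hb

section Holomorphic

variable {E F : Type*} [NormedAddCommGroup E] [NormedSpace ℂ E]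
  [NormedAddCommGroup F] [NormedSpace ℂ F]

theorem norm_fderiv_le_of_forall_mem_closedBall_norm_le {f : E → F} {z : E} {R C : ℝ}
    (hR : 0 < R) (hf : DifferentiableOn ℂ f (closedBall z R))
    (hC : ∀ w ∈ closedBall z R, ‖f w‖ ≤ C) : ‖fderiv ℂ f z‖ ≤ C / R := by
  have hC₀ : 0 ≤ C := (norm_nonneg _).trans (hC z (mem_closedBall_self hR.le))
  refine ContinuousLinearMap.opNorm_le_bound _ (by positivity) fun v ↦ ?_
  rcases eq_or_ne v 0 with rfl | hv
  · simp
  have hv' : 0 < ‖v‖ := norm_pos_iff.2 hv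
  -- Cauchy's estimate for `t ↦ f (z + t • v)` on the disc of radius `R / ‖v‖`
  have hmem : ∀ t ∈ closedBall (0 : ℂ) (R / ‖v‖), z + t • v ∈ closedBall z R := fun t ht ↦ by
    rw [mem_closedBall_zero_iff, le_div_iff₀ hv'] at ht
    simpa [norm_smul] using ht
  have hline : DifferentiableOn ℂ (fun t : ℂ ↦ f (z + t • v)) (closedBall 0 (R / ‖v‖)) :=
    hf.comp ((differentiable_const z).add (differentiable_id.smul_const v)).differentiableOn hmem
  have hderiv : deriv (fun t : ℂ ↦ f (z + t • v)) 0 = fderiv ℂ f z v := by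
    have hz : HasFDerivAt f (fderiv ℂ f z) (z + (0 : ℂ) • v) := by
      simpa using (hf.differentiableAt (closedBall_mem_nhds z hR)).hasFDerivAt
    simpa [Function.comp_def] using
      (hz.comp_hasDerivAt (0 : ℂ) (((hasDerivAt_id _).smul_const v).const_add z)).deriv
  have := Complex.norm_deriv_le_of_forall_mem_sphere_norm_le (by positivity)
    (hline.mono closure_ball_subset_closedBall).diffContOnCl
    fun t ht ↦ hC _ (hmem t (sphere_subset_closedBall ht))
  rw [hderiv] at this
  calc ‖fderiv ℂ f z v‖ ≤ C / (R / ‖v‖) := this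
    _ = C / R * ‖v‖ := by field_simp

variable [FiniteDimensional ℂ E]

theorem DifferentiableOn.continuousOn_fderiv_of_isOpen {f : E → F} {s : Set E}
    (hf : DifferentiableOn ℂ f s) (hs : IsOpen s) : ContinuousOn (fderiv ℂ f) s := by
  intro z₀ hz₀
  refine (Metric.continuousAt_iff.2 fun ε hε ↦ ?_).continuousWithinAt
  obtain ⟨R, hR, hRs⟩ := nhds_basis_closedBall.mem_iff.1 (hs.mem_nhds hz₀)
  have hshift : ∀ z ∈ ball z₀ (R / 2), ∀ w ∈ closedBall z₀ (R / 2),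
      w + (z - z₀) ∈ closedBall z₀ R := fun z hz w hw ↦ by
    rw [mem_closedBall, dist_eq_norm] at hw ⊢
    rw [mem_ball, dist_eq_norm] at hz
    calc ‖w + (z - z₀) - z₀‖ ≤ ‖w - z₀‖ + ‖z - z₀‖ := by
          rw [add_sub_right_comm]; exact norm_add_le _ _
      _ ≤ R := by linarith
  obtain ⟨δ, hδ, hfδ⟩ := Metric.uniformContinuousOn_iff.1
    ((isCompact_closedBall z₀ R).uniformContinuousOn_of_continuous (hf.continuousOn.mono hRs))
    (ε * (R / 2) / 2) (by positivity)
  refine ⟨min δ (R / 2), by positivity, ?_⟩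
  intro z hz
  have hzδ := hz.trans_le (min_le_left δ _)
  have hzR : z ∈ ball z₀ (R / 2) := hz.trans_le (min_le_right _ _)
  have hd : ∀ w ∈ closedBall z₀ R, DifferentiableAt ℂ f w := fun w hw ↦
    hf.differentiableAt (hs.mem_nhds (hRs hw))
  -- `fderiv f z - fderiv f z₀` is the derivative at `z₀` of `w ↦ f (w + (z - z₀)) - f w`,
  -- which is uniformly small on `closedBall z₀ (R / 2)`
  have hdiff : DifferentiableOn ℂ (fun w ↦ f (w + (z - z₀)) - f w) (closedBall z₀ (R / 2)) :=
    ((hf.mono hRs).comp (differentiable_id.add_const _).differentiableOn (hshift z hzR)).sub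
      ((hf.mono hRs).mono (closedBall_subset_closedBall (by linarith)))
  have hfd : fderiv ℂ (fun w ↦ f (w + (z - z₀)) - f w) z₀ = fderiv ℂ f z - fderiv ℂ f z₀ := by
    rw [fderiv_fun_sub _ (hd z₀ (mem_closedBall_self hR.le)), fderiv_comp_add_right,
      add_sub_cancel]
    exact (hd _ (hshift z hzR z₀ (mem_closedBall_self (by positivity)))).comp z₀
      (differentiableAt_id.add_const _)
  have hsmall : ∀ w ∈ closedBall z₀ (R / 2), ‖f (w + (z - z₀)) - f w‖ ≤ ε * (R / 2) / 2 := by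
    intro w hw
    rw [← dist_eq_norm]
    refine (hfδ _ (hshift z hzR w hw) _ (closedBall_subset_closedBall (by linarith) hw) ?_).le
    simpa [dist_eq_norm] using hzδ
  rw [dist_eq_norm, ← hfd]
  calc _ ≤ ε * (R / 2) / 2 / (R / 2) :=
        norm_fderiv_le_of_forall_mem_closedBall_norm_le (by positivity) hdiff hsmall
    _ < ε := by field_simp; linarith

theorem DifferentiableOn.contDiffAt_one {f : E → F} {s : Set E} {x : E}
    (hf : DifferentiableOn ℂ f s) (hs : IsOpen s) (hx : x ∈ s) : ContDiffAt ℂ 1 f x :=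
  contDiffAt_one_iff.2 ⟨fderiv ℂ f, s, hs.mem_nhds hx, hf.continuousOn_fderiv_of_isOpen hs,
    fun _ hy ↦ (hf.differentiableAt (hs.mem_nhds hy)).hasFDerivAt⟩

end Holomorphic

namespace HasStrictFDerivAt

variable {𝕜 E F : Type*} [RCLike 𝕜] [NormedAddCommGroup E] [NormedSpace 𝕜 E] [CompleteSpace E]
  [NormedAddCommGroup F] [NormedSpace 𝕜 F] [FiniteDimensional 𝕜 F]
  {f : E → F} {f' : E →L[𝕜] F} {a : E}

theorem contDiffAt_uncurry_implicitFunction (hf : HasStrictFDerivAt f f' a)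
    (hf' : f'.range = ⊤) {n : WithTop ℕ∞} (hfn : ContDiffAt 𝕜 n f a) (hn : n ≠ 0) :
    ContDiffAt 𝕜 n (uncurry (hf.implicitFunction f f' hf')) (f a, 0) := by
  have := FiniteDimensional.complete 𝕜 F
  have hker := f'.ker_closedComplemented_of_finiteDimensional_range
  have h := (implicitFunctionDataOfComplemented f f' hf hf' hker).contDiffAt_implicitFunction
    hfn (((Classical.choose hker).contDiff.comp (contDiff_id.sub contDiff_const)).contDiffAt) hn
  convert h using 1
  · rfl
  · simp [ImplicitFunctionData.prodFun_apply]

theorem map_implicitFunction_nhds_zero (hf : HasStrictFDerivAt f f' a) (hf' : f'.range = ⊤) :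
    map (hf.implicitFunction f f' hf' (f a)) (𝓝 0) = 𝓝[f ⁻¹' {f a}] a := by
  have := FiniteDimensional.complete 𝕜 F
  set φ := implicitFunctionDataOfComplemented f f' hf hf'
    f'.ker_closedComplemented_of_finiteDimensional_range
  have h := φ.map_implicitFunction_nhdsWithin_preimage univ
  have h0 : φ.rightFun φ.pt = 0 := by simp [φ]
  rw [h0, preimage_univ, nhdsWithin_univ, univ_inter] at h
  exact h

end HasStrictFDerivAt

theorem ContDiffAt.exists_parametrization_levelSet {𝕜 E F : Type*} [RCLike 𝕜]
    [NormedAddCommGroup E] [NormedSpace 𝕜 E] [CompleteSpace E]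
    [NormedAddCommGroup F] [NormedSpace 𝕜 F] [FiniteDimensional 𝕜 F] {f : E → F} {a : E}
    (hf : ContDiffAt 𝕜 1 f a) (hf' : (fderiv 𝕜 f a).range = ⊤) :
    ∃ (K : Submodule 𝕜 E) (ψ : F → K → E), ψ (f a) 0 = a ∧
      (∀ᶠ w in 𝓝 (f a, 0), f (ψ w.1 w.2) = w.1) ∧ ContDiffAt 𝕜 1 (uncurry ψ) (f a, 0) ∧
      map (ψ (f a)) (𝓝 0) = 𝓝[f ⁻¹' {f a}] a :=
  have hs := hf.hasStrictFDerivAt one_ne_zero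
  ⟨_, hs.implicitFunction f _ hf', hs.implicitFunction_apply_image hf',
    hs.map_implicitFunction_eq hf', hs.contDiffAt_uncurry_implicitFunction hf' hf one_ne_zero,
    hs.map_implicitFunction_nhds_zero hf'⟩

section Manifold

variable {E F : Type*} [NormedAddCommGroup E] [NormedSpace ℂ E] [NormedAddCommGroup F]
  [NormedSpace ℂ F] {M N : Type*} [TopologicalSpace M] [ChartedSpace E M] [TopologicalSpace N]
  [ChartedSpace F N] {p : M → N}

theorem map_extChartAt_symm_nhdsWithin_preimage_writtenInExtChartAt {y : M}
    (hp : ContinuousAt p y) :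
    map (extChartAt 𝓘(ℂ, E) y).symm
        (𝓝[writtenInExtChartAt 𝓘(ℂ, E) 𝓘(ℂ, F) y p ⁻¹' {extChartAt 𝓘(ℂ, F) (p y) (p y)}]
          (extChartAt 𝓘(ℂ, E) y y)) = 𝓝[p ⁻¹' {p y}] y := by
  rw [← map_extChartAt_symm_nhdsWithin (I := 𝓘(ℂ, E)) y, ModelWithCorners.range_eq_univ,
    inter_univ]
  refine congrArg _ (nhdsWithin_eq_nhdsWithin' (extChartAt_preimage_mem_nhds
    (hp.preimage_mem_nhds (extChartAt_source_mem_nhds (I := 𝓘(ℂ, F)) (p y)))) (Set.ext fun ζ ↦ ?_))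
  simp only [mem_inter_iff, mem_preimage, mem_singleton_iff, writtenInExtChartAt, comp_apply]
  exact and_congr_left fun hζ ↦ (extChartAt 𝓘(ℂ, F) (p y)).injOn.eq_iff hζ
    (mem_extChartAt_source (p y))

theorem MDifferentiableAt.fderiv_writtenInExtChartAt {y : M}
    (hp : MDifferentiableAt 𝓘(ℂ, E) 𝓘(ℂ, F) p y) :
    fderiv ℂ (writtenInExtChartAt 𝓘(ℂ, E) 𝓘(ℂ, F) y p) (extChartAt 𝓘(ℂ, E) y y) =
      mfderiv 𝓘(ℂ, E) 𝓘(ℂ, F) p y := by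
  rw [hp.mfderiv, modelWithCornersSelf_coe, range_id, fderivWithin_univ]

variable [FiniteDimensional ℂ E] [IsManifold 𝓘(ℂ, E) 1 M] [IsManifold 𝓘(ℂ, F) 1 N]

theorem MDifferentiable.contDiffAt_writtenInExtChartAt (hp : MDifferentiable 𝓘(ℂ, E) 𝓘(ℂ, F) p)
    (y : M) : ContDiffAt ℂ 1 (writtenInExtChartAt 𝓘(ℂ, E) 𝓘(ℂ, F) y p) (extChartAt 𝓘(ℂ, E) y y) :=
  ((mdifferentiable_iff.1 hp).2 y (p y)).contDiffAt_one
    ((continuousOn_extChartAt_symm y).isOpen_inter_preimage (isOpen_extChartAt_target y)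
      ((isOpen_extChartAt_source (p y)).preimage hp.continuous))
    ⟨mem_extChartAt_target y, by simp⟩

variable [FiniteDimensional ℂ F]

theorem exists_fiber_parametrization (hp : MDifferentiable 𝓘(ℂ, E) 𝓘(ℂ, F) p) {y : M}
    (hy : Surjective (mfderiv 𝓘(ℂ, E) 𝓘(ℂ, F) p y)) :
    ∃ (K : Submodule ℂ E) (Ψ : N → K → M), Ψ (p y) 0 = y ∧
      (∀ᶠ q in 𝓝 (p y, 0), p (Ψ q.1 q.2) = q.1) ∧
      (∀ᶠ q in 𝓝 (p y, 0),
        MDifferentiableAt (𝓘(ℂ, F).prod 𝓘(ℂ, K)) 𝓘(ℂ, E) (uncurry Ψ) q) ∧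
      map (Ψ (p y)) (𝓝 0) = 𝓝[p ⁻¹' {p y}] y := by
  obtain ⟨K, ψ, hψ₀, hfψ, hψC, hψmap⟩ :=
    (hp.contDiffAt_writtenInExtChartAt y).exists_parametrization_levelSet
      (by rw [(hp y).fderiv_writtenInExtChartAt]; exact LinearMap.range_eq_top.2 hy)
  set φ := extChartAt 𝓘(ℂ, E) y
  set χ := extChartAt 𝓘(ℂ, F) (p y)
  set f := writtenInExtChartAt 𝓘(ℂ, E) 𝓘(ℂ, F) y p
  have hfy : f (φ y) = χ (p y) := by
    simp only [f, writtenInExtChartAt, comp_apply, φ, χ, extChartAt_to_inv]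
  rw [hfy] at hψ₀ hfψ hψC hψmap
  set O := φ.target ∩ φ.symm ⁻¹' (p ⁻¹' χ.source)
  have hO : O ∈ 𝓝 (φ y) :=
    inter_mem (extChartAt_target_mem_nhds y) (extChartAt_preimage_mem_nhds
      (hp.continuous.continuousAt.preimage_mem_nhds (extChartAt_source_mem_nhds (p y))))
  have hψO : ∀ᶠ w in 𝓝 (χ (p y), 0), uncurry ψ w ∈ O :=
    hψC.continuousAt.preimage_mem_nhds (by rwa [uncurry_apply_pair, hψ₀])
  have hT : Tendsto (fun q : N × K ↦ (χ q.1, q.2)) (𝓝 (p y, 0)) (𝓝 (χ (p y), 0)) :=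
    (((continuousAt_extChartAt (p y)).comp (x := ((p y, 0) : N × K)) continuousAt_fst).prodMk
      continuousAt_snd).tendsto
  have hsource : ∀ᶠ q : N × K in 𝓝 (p y, 0), q.1 ∈ χ.source :=
    continuousAt_fst.preimage_mem_nhds ((isOpen_extChartAt_source (p y)).mem_nhds
      (mem_extChartAt_source (p y)))
  refine ⟨K, fun x' z ↦ φ.symm (ψ (χ x') z), ?_, ?_, ?_, ?_⟩
  · simp only [hψ₀, φ, extChartAt_to_inv]
  · filter_upwards [hT.eventually (hfψ.and hψO), hsource] with q ⟨hq, hqO⟩ hq₁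
    exact χ.injOn hqO.2 hq₁ hq
  · filter_upwards [hT.eventually ((hψC.eventually (by simp)).and hψO), hsource]
      with q ⟨hqC, hqO⟩ hq₁
    have hψq : MDifferentiableAt (𝓘(ℂ, F).prod 𝓘(ℂ, K)) 𝓘(ℂ, E) (uncurry ψ) (χ q.1, q.2) := by
      rw [← modelWithCornersSelf_prod, chartedSpaceSelf_prod]
      exact (hqC.differentiableAt one_ne_zero).mdifferentiableAt
    have hφq : MDifferentiableAt 𝓘(ℂ, E) 𝓘(ℂ, E) φ.symm (uncurry ψ (χ q.1, q.2)) := by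
      have h := mdifferentiableWithinAt_extChartAt_symm hqO.1
      rwa [ModelWithCorners.range_eq_univ, mdifferentiableWithinAt_univ] at h
    exact hφq.comp q (hψq.comp q
      ((mdifferentiableAt_extChartAt (by rwa [← extChartAt_source 𝓘(ℂ, F)])).prodMap
        mdifferentiableAt_id))
  · change map (φ.symm ∘ ψ (χ (p y))) (𝓝 0) = _
    rw [← map_map, hψmap]
    exact map_extChartAt_symm_nhdsWithin_preimage_writtenInExtChartAt hp.continuous.continuousAt

theorem subsingleton_image_fiber_of_mdifferentiableAt (hp : MDifferentiable 𝓘(ℂ, E) 𝓘(ℂ, F) p)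
    (hsub : ∀ y, Surjective (mfderiv 𝓘(ℂ, E) 𝓘(ℂ, F) p y)) {G : Type*} [NormedAddCommGroup G]
    [NormedSpace ℂ G] [StrictConvexSpace ℝ G] {h : M → G} {x : N}
    (hh : ∀ y ∈ p ⁻¹' {x}, MDifferentiableAt 𝓘(ℂ, E) 𝓘(ℂ, G) h y)
    (hK : IsCompact (p ⁻¹' {x})) (hconn : IsConnected (p ⁻¹' {x})) :
    (h '' (p ⁻¹' {x})).Subsingleton := by
  have hcont : ContinuousOn h (p ⁻¹' {x}) := fun y hy ↦ (hh y hy).continuousAt.continuousWithinAt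
  obtain ⟨y₀, hy₀, hmax⟩ := hK.exists_isMaxOn hconn.nonempty hcont.norm
  suffices hloc : ∀ y ∈ p ⁻¹' {x}, h y = h y₀ → ∀ᶠ y' in 𝓝[p ⁻¹' {x}] y, h y' = h y₀ by
    rintro _ ⟨y, hy, rfl⟩ _ ⟨y', hy', rfl⟩
    rw [hconn.isPreconnected.apply_eq_of_eventually_eq hcont hloc hy₀ rfl hy,
      hconn.isPreconnected.apply_eq_of_eventually_eq hcont hloc hy₀ rfl hy']
  intro y hy hyc
  obtain rfl : p y = x := hy
  obtain ⟨K, Ψ, hΨ₀, hpΨ, hΨ, hΨmap⟩ := exists_fiber_parametrization hp (hsub y)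
  have hslice := (Continuous.prodMk_right (p y)).tendsto (0 : K)
  obtain ⟨r, hr, hball⟩ := Metric.eventually_nhds_iff_ball.1
    ((hslice.eventually (hpΨ.and hΨ)).mono fun z hz ↦
      (⟨hz.1, ((hh _ hz.1).comp z (hz.2.comp z (mdifferentiableAt_const.prodMk
        mdifferentiableAt_id))).differentiableAt⟩ :
        p (Ψ (p y) z) = p y ∧ DifferentiableAt ℂ (h ∘ Ψ (p y)) z))
  have hconst := Complex.eqOn_of_isPreconnected_of_isMaxOn_norm
    (convex_ball (0 : K) r).isPreconnected isOpen_ball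
    (fun z hz ↦ (hball z hz).2.differentiableWithinAt) (mem_ball_self hr)
    fun z hz ↦ by simpa [hΨ₀, hyc] using hmax (hball z hz).1
  rw [← hΨmap, eventually_map]
  filter_upwards [ball_mem_nhds (0 : K) hr] with z hz
  simpa [hΨ₀, hyc] using hconst hz

theorem isOpen_setOf_subsingleton_image_fiber (hp : MDifferentiable 𝓘(ℂ, E) 𝓘(ℂ, F) p)
    (hproper : IsProperMap p) (hsub : ∀ y, Surjective (mfderiv 𝓘(ℂ, E) 𝓘(ℂ, F) p y))
    (hfib : ∀ x, IsConnected (p ⁻¹' {x})) {g : M → N} (hg : MDifferentiable 𝓘(ℂ, E) 𝓘(ℂ, F) g) :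
    IsOpen {x | (g '' (p ⁻¹' {x})).Subsingleton} := by
  refine isOpen_iff_mem_nhds.2 fun x₀ hx₀ ↦ ?_
  obtain ⟨y₀, hy₀⟩ := (hfib x₀).nonempty
  set e := extChartAt 𝓘(ℂ, F) (g y₀)
  have hsource : ∀ᶠ x in 𝓝 x₀, ∀ y ∈ p ⁻¹' {x}, g y ∈ e.source :=
    hproper.isClosedMap.eventually_nhds_fiber x₀ fun y hy ↦
      hg.continuous.continuousAt.preimage_mem_nhds (extChartAt_source_mem_nhds' (by
        rw [hx₀ (mem_image_of_mem g hy) (mem_image_of_mem g hy₀)]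
        exact mem_extChartAt_source (g y₀)))
  filter_upwards [hsource] with x hx
  rintro _ ⟨y, hy, rfl⟩ _ ⟨y', hy', rfl⟩
  -- the maximum modulus principle needs a strictly convex target, so apply it to each `ℓ ∘ e ∘ g`
  refine e.injOn (hx y hy) (hx y' hy')
    ((SeparatingDual.eq_iff_forall_dual_eq (R := ℂ)).2 fun ℓ ↦ ?_)
  refine subsingleton_image_fiber_of_mdifferentiableAt hp hsub (h := ℓ ∘ e ∘ g)
    (fun y hy ↦ ?_) (hproper.isCompact_preimage isCompact_singleton) (hfib x)
    (mem_image_of_mem _ hy) (mem_image_of_mem _ hy')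
  exact ℓ.mdifferentiableAt.comp y ((mdifferentiableAt_extChartAt
    (by rw [← extChartAt_source 𝓘(ℂ, F)]; exact hx y hy)).comp y (hg y))

theorem isClosed_setOf_subsingleton_image_fiber (hp : MDifferentiable 𝓘(ℂ, E) 𝓘(ℂ, F) p)
    (hsub : ∀ y, Surjective (mfderiv 𝓘(ℂ, E) 𝓘(ℂ, F) p y))
    (hfib : ∀ x, IsPreconnected (p ⁻¹' {x})) {g : M → N} (hg : Continuous g) :
    IsClosed {x | (g '' (p ⁻¹' {x})).Subsingleton} := by
  refine closure_subset_iff_isClosed.1 fun x hx ↦ ?_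
  suffices hloc : ∀ y ∈ p ⁻¹' {x}, ∀ᶠ y' in 𝓝[p ⁻¹' {x}] y, g y = g y' by
    rintro _ ⟨y, hy, rfl⟩ _ ⟨y', hy', rfl⟩
    exact (hfib x).induction₂ (fun a b ↦ g a = g b) hloc (fun _ _ _ _ _ _ ↦ Eq.trans)
      (fun _ _ _ _ ↦ Eq.symm) hy hy'
  intro y hy
  obtain rfl : p y = x := hy
  obtain ⟨K, Ψ, hΨ₀, hpΨ, hΨ, hΨmap⟩ := exists_fiber_parametrization hp (hsub y)
  set e := chartAt F (g y)
  have hgood : ∀ᶠ q in 𝓝 (p y, 0), p (Ψ q.1 q.2) = q.1 ∧ ContinuousAt (uncurry Ψ) q ∧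
      g (Ψ q.1 q.2) ∈ e.source :=
    hpΨ.and ((hΨ.mono fun q hq ↦ hq.continuousAt).and
      ((ContinuousAt.comp (g := g) hg.continuousAt hΨ.self_of_nhds.continuousAt).preimage_mem_nhds
        (e.open_source.mem_nhds (by
          rw [comp_apply, uncurry_apply_pair, hΨ₀]; exact mem_chart_source F (g y)))))
  obtain ⟨U, hU, V, hV, hUV⟩ := mem_nhds_prod_iff.1 hgood
  have hcont : ∀ z ∈ V, ContinuousAt (fun x' ↦ e (g (Ψ x' z))) (p y) := fun z hz ↦
    have hq := hUV (mk_mem_prod (mem_of_mem_nhds hU) hz)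
    have hΨz : ContinuousAt (fun x' ↦ Ψ x' z) (p y) :=
      hq.2.1.comp (f := fun x' ↦ (x', z)) (Continuous.prodMk_left z).continuousAt
    ContinuousAt.comp (f := fun x' ↦ g (Ψ x' z)) (e.continuousAt hq.2.2)
      (ContinuousAt.comp (f := fun x' ↦ Ψ x' z) hg.continuousAt hΨz)
  rw [← hΨmap, eventually_map]
  filter_upwards [hV] with z hz
  -- pass to the limit along points of the closure where `g` is constant on fibers
  have heq : e (g (Ψ (p y) z)) = e (g (Ψ (p y) 0)) :=
    tendsto_nhds_unique_of_frequently_eq (hcont z hz) (hcont 0 (mem_of_mem_nhds hV))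
      (((mem_closure_iff_frequently.1 hx).and_eventually hU).mono fun x' ⟨hS, hx'⟩ ↦
        congrArg e (hS (mem_image_of_mem g (hUV (mk_mem_prod hx' hz)).1)
          (mem_image_of_mem g (hUV (mk_mem_prod hx' (mem_of_mem_nhds hV))).1)))
  have h := e.injOn (hUV (mk_mem_prod (mem_of_mem_nhds hU) (mem_of_mem_nhds hV))).2.2
    (hUV (mk_mem_prod (mem_of_mem_nhds hU) hz)).2.2 heq.symm
  rwa [hΨ₀] at h

theorem mdifferentiable_of_comp_eq_of_submersion (hp : MDifferentiable 𝓘(ℂ, E) 𝓘(ℂ, F) p)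
    (hsurj : Surjective p) (hsub : ∀ y, Surjective (mfderiv 𝓘(ℂ, E) 𝓘(ℂ, F) p y))
    {g : M → N} (hg : MDifferentiable 𝓘(ℂ, E) 𝓘(ℂ, F) g) {f : N → N} (hfg : f ∘ p = g) :
    MDifferentiable 𝓘(ℂ, F) 𝓘(ℂ, F) f := by
  intro x
  obtain ⟨y, rfl⟩ := hsurj x
  obtain ⟨K, Ψ, hΨ₀, hpΨ, hΨ, -⟩ := exists_fiber_parametrization hp (hsub y)
  have hσ : MDifferentiableAt 𝓘(ℂ, F) 𝓘(ℂ, E) (fun x' ↦ Ψ x' 0) (p y) :=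
    hΨ.self_of_nhds.comp (p y) (mdifferentiableAt_id.prodMk mdifferentiableAt_const)
  refine ((hg _).comp (p y) hσ).congr_of_eventuallyEq ?_
  filter_upwards [((Continuous.prodMk_left (0 : K)).tendsto (p y)).eventually hpΨ] with x' hx'
  rw [← hfg, comp_apply, comp_apply, hx']

end Manifold

theorem holomorphic_map_of_fiber_spaces
    {k d : ℕ} {Y X : Type*} [TopologicalSpace Y] [TopologicalSpace X]
    [ChartedSpace (EuclideanSpace ℂ (Fin k)) Y]
    [IsManifold 𝓘(ℂ, EuclideanSpace ℂ (Fin k)) (⊤ : ℕ∞) Y]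
    [ChartedSpace (EuclideanSpace ℂ (Fin d)) X]
    [IsManifold 𝓘(ℂ, EuclideanSpace ℂ (Fin d)) (⊤ : ℕ∞) X]
    [ConnectedSpace X]
    (p : Y → X)
    (hp : MDifferentiable 𝓘(ℂ, EuclideanSpace ℂ (Fin k)) 𝓘(ℂ, EuclideanSpace ℂ (Fin d)) p)
    (hp_proper : IsProperMap p)
    (hp_surj : Function.Surjective p)
    -- `p` is a submersion
    (hp_subm : ∀ y : Y, Function.Surjective
      (mfderiv 𝓘(ℂ, EuclideanSpace ℂ (Fin k)) 𝓘(ℂ, EuclideanSpace ℂ (Fin d)) p y))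
    -- the fibers of `p` are connected
    (hp_fib : ∀ x : X, IsConnected (p ⁻¹' {x}))
    (F : Y → Y)
    (hF : MDifferentiable 𝓘(ℂ, EuclideanSpace ℂ (Fin k)) 𝓘(ℂ, EuclideanSpace ℂ (Fin k)) F)
    (a b : X) (hab : Set.MapsTo F (p ⁻¹' {a}) (p ⁻¹' {b})) :
    ∃ f : X → X,
      MDifferentiable 𝓘(ℂ, EuclideanSpace ℂ (Fin d)) 𝓘(ℂ, EuclideanSpace ℂ (Fin d)) f ∧
      p ∘ F = f ∘ p := by
  set g := p ∘ F
  have hg : MDifferentiable 𝓘(ℂ, EuclideanSpace ℂ (Fin k)) 𝓘(ℂ, EuclideanSpace ℂ (Fin d)) g :=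
    hp.comp hF
  have hS : {x | (g '' (p ⁻¹' {x})).Subsingleton} = univ := by
    refine IsClopen.eq_univ ⟨isClosed_setOf_subsingleton_image_fiber hp hp_subm
      (fun x ↦ (hp_fib x).isPreconnected) hg.continuous,
      isOpen_setOf_subsingleton_image_fiber hp hp_proper hp_subm hp_fib hg⟩ ⟨a, ?_⟩
    rintro _ ⟨y, hy, rfl⟩ _ ⟨y', hy', rfl⟩
    exact (hab hy).trans (hab hy').symm
  have hfg : (g ∘ surjInv hp_surj) ∘ p = g := funext fun y ↦
    (hS.symm ▸ mem_univ (p y) : p y ∈ {x | (g '' (p ⁻¹' {x})).Subsingleton})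
      (mem_image_of_mem g (surjInv_eq hp_surj (p y))) (mem_image_of_mem g rfl)
  exact ⟨g ∘ surjInv hp_surj,
    mdifferentiable_of_comp_eq_of_submersion hp hp_surj hp_subm hg hfg, hfg.symm⟩
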